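/- arXiv:1805.01850 — 5 statements merged into one kernel-verified Lean document; each statement's English description precedes it below -/
import Mathlib

section
/- In any diagram, every cycle of the multigraph that passes through an interaction vertex of type {B,A,A} passes only through interaction vertices of type {B,A,A}, and every edge of that cycle is a propagator of type {A,B}. -/
/-!  Feynman-diagram combinatorics of 4D topological Yang–Mills theory
in the (anti-)self-dual Landau gauges. -/

/-- The ten field labels. -/
inductive Fld : Type
  | A | psi | chibar | c | cbar | phi | phibar | etabar | B | b
  deriving DecidableEq

/-- The seven allowed interaction-vertex types (multisets of labels). -/
def vertexTypes : List (Multiset Fld) :=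
  [ {Fld.B, Fld.A, Fld.A}
  , {Fld.chibar, Fld.A, Fld.c}
  , {Fld.A, Fld.psi, Fld.chibar}
  , {Fld.A, Fld.cbar, Fld.c}
  , {Fld.A, Fld.phibar, Fld.phi}
  , {Fld.phibar, Fld.c, Fld.psi}
  , {Fld.chibar, Fld.c, Fld.A, Fld.A} ]

/-- The six allowed propagator types (unordered pairs of labels). -/
def propTypes : List (Multiset Fld) :=
  [ {Fld.c, Fld.cbar}
  , {Fld.chibar, Fld.psi}
  , {Fld.etabar, Fld.psi}
  , {Fld.phi, Fld.phibar}
  , {Fld.A, Fld.B}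
  , {Fld.A, Fld.b} ]

/-- A Feynman diagram: a finite set `H` of half-edges labelled by fields,
partitioned into vertices (the fibers of `vtx`), each vertex being an
interaction vertex of one of the seven allowed types or an external vertex
(a single half-edge), together with a perfect matching `mu` whose matched
pairs realize one of the six allowed propagator types. -/
structure Diagram where
  H : Type
  V : Type
  [fintypeH : Fintype H]
  [decEqH : DecidableEq H]
  [fintypeV : Fintype V]
  [decEqV : DecidableEq V]
  vtx : H → V
  vtx_surj : Function.Surjective vtx
  lab : H → Fld
  mu : H → H
  mu_invol : Function.Involutive mu
  mu_ne : ∀ h, mu h ≠ h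
  prop_ok : ∀ h, ({lab h, lab (mu h)} : Multiset Fld) ∈ propTypes
  vtx_ok : ∀ v : V,
      ((Finset.univ.filter (fun h => vtx h = v)).val.map lab) ∈ vertexTypes
      ∨ ∃ h, Finset.univ.filter (fun h' => vtx h' = v) = {h}

attribute [instance] Diagram.fintypeH Diagram.decEqH Diagram.fintypeV Diagram.decEqV

namespace Diagram

variable (D : Diagram)

/-- The set of half-edges belonging to a vertex. -/
def fiber (v : D.V) : Finset D.H := Finset.univ.filter (fun h => D.vtx h = v)

/-- The multiset of field labels carried by a vertex. -/
def labels (v : D.V) : Multiset Fld := (D.fiber v).val.map D.lab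

/-- An external vertex: a single half-edge (an external leg). -/
def IsExternal (v : D.V) : Prop := ∃ h, D.fiber v = {h}

/-- An interaction vertex: its labels form one of the seven allowed types. -/
def IsInteraction (v : D.V) : Prop := D.labels v ∈ vertexTypes

/-- Adjacency of the multigraph of the diagram. -/
def Adj (v w : D.V) : Prop := ∃ h, D.vtx h = v ∧ D.vtx (D.mu h) = w

/-- Connectedness of the multigraph of the diagram. -/
def Connected : Prop := ∀ v w : D.V, Relation.ReflTransGen D.Adj v w

/-- A cycle of the multigraph: a closed walk `e 0, e 1, …, e (n-1)` of
half-edges (each matched pair `{e i, mu (e i)}` being the traversed edge),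
of positive length, with pairwise distinct edges and pairwise distinct
vertices. -/
structure Cycle where
  n : ℕ
  npos : 0 < n
  e : ZMod n → D.H
  step : ∀ i, D.vtx (D.mu (e i)) = D.vtx (e (i + 1))
  edges_distinct : ∀ i j, i ≠ j → e i ≠ e j ∧ e i ≠ D.mu (e j)
  vtx_inj : Function.Injective fun i => D.vtx (e i)

/-- A loop diagram: the multigraph contains a cycle. -/
def IsLoopDiagram : Prop := Nonempty D.Cycle

end Diagram

namespace BAAProof

open Diagram

variable {D : Diagram}

lemma d1 : ∀ m ∈ vertexTypes, Fld.B ∈ m → m = ({Fld.B, Fld.A, Fld.A} : Multiset Fld) := by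
  decide

lemma d2 : ∀ m ∈ vertexTypes, Fld.b ∉ m := by decide

lemma d3 : ∀ x : Fld, ({Fld.A, x} : Multiset Fld) ∈ propTypes → x = Fld.B ∨ x = Fld.b := by
  intro x; cases x <;> decide

lemma d3' : ∀ x : Fld, ({x, Fld.A} : Multiset Fld) ∈ propTypes → x = Fld.B ∨ x = Fld.b := by
  intro x; cases x <;> decide

lemma d4 : ∀ x : Fld, ({Fld.B, x} : Multiset Fld) ≤ ({Fld.B, Fld.A, Fld.A} : Multiset Fld) →
    x = Fld.A := by intro x; cases x <;> decide

lemma d5 : ∀ x : Fld, x ∈ ({Fld.B, Fld.A, Fld.A} : Multiset Fld) → x = Fld.A ∨ x = Fld.B := by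
  intro x; cases x <;> decide

lemma d6 : ∀ x : Fld, ({Fld.B, x} : Multiset Fld) ∈ propTypes → x = Fld.A := by
  intro x; cases x <;> decide

lemma mem_fiber {h : D.H} {v : D.V} (hv : D.vtx h = v) : h ∈ D.fiber v := by
  simp [Diagram.fiber, hv]

lemma lab_mem_labels {h : D.H} {v : D.V} (hv : D.vtx h = v) : D.lab h ∈ D.labels v :=
  Multiset.mem_map_of_mem _ (mem_fiber hv)

lemma pair_le_labels {h1 h2 : D.H} {v : D.V} (h12 : h1 ≠ h2)
    (hv1 : D.vtx h1 = v) (hv2 : D.vtx h2 = v) :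
    ({D.lab h1, D.lab h2} : Multiset Fld) ≤ D.labels v := by
  have hsub : ({h1, h2} : Finset D.H) ⊆ D.fiber v := by
    intro x hx
    rcases Finset.mem_insert.mp hx with rfl | hx
    · exact mem_fiber hv1
    · rw [Finset.mem_singleton] at hx; subst hx; exact mem_fiber hv2
  have hle : ({h1, h2} : Finset D.H).val ≤ (D.fiber v).val := Finset.val_le_iff.mpr hsub
  have hval : ({h1, h2} : Finset D.H).val = ({h1, h2} : Multiset D.H) := by
    rw [Finset.insert_val_of_notMem (by simpa using h12)]
    rfl
  have := Multiset.map_le_map (f := D.lab) hle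
  rw [hval] at this
  simpa [Diagram.labels] using this

lemma incoming_ne (C : D.Cycle) (i : ZMod C.n) : D.mu (C.e (i - 1)) ≠ C.e i := by
  by_cases h : i - 1 = i
  · rw [h]
    exact fun hc => D.mu_ne _ hc
  · intro hc
    exact (C.edges_distinct (i - 1) i h).2 (by rw [← hc, D.mu_invol])

lemma incoming_vtx (C : D.Cycle) (i : ZMod C.n) :
    D.vtx (D.mu (C.e (i - 1))) = D.vtx (C.e i) := by
  rw [C.step (i - 1), sub_add_cancel]

lemma inter (C : D.Cycle) (i : ZMod C.n) : D.labels (D.vtx (C.e i)) ∈ vertexTypes := by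
  rcases D.vtx_ok (D.vtx (C.e i)) with h | ⟨h0, hfib⟩
  · exact h
  · exfalso
    have h1 : C.e i ∈ D.fiber (D.vtx (C.e i)) := mem_fiber rfl
    have h2 : D.mu (C.e (i - 1)) ∈ D.fiber (D.vtx (C.e i)) := mem_fiber (incoming_vtx C i)
    rw [Diagram.fiber, hfib, Finset.mem_singleton] at h1 h2
    exact incoming_ne C i (h2.trans h1.symm)

lemma forward (C : D.Cycle) (i : ZMod C.n)
    (hv : D.labels (D.vtx (C.e i)) = {Fld.B, Fld.A, Fld.A}) (hl : D.lab (C.e i) = Fld.A) :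
    D.lab (D.mu (C.e i)) = Fld.B ∧
    D.labels (D.vtx (C.e (i + 1))) = {Fld.B, Fld.A, Fld.A} ∧
    D.lab (C.e (i + 1)) = Fld.A := by
  have hp := D.prop_ok (C.e i)
  rw [hl] at hp
  have hmuvtx : D.vtx (D.mu (C.e i)) = D.vtx (C.e (i + 1)) := C.step i
  rcases d3 _ hp with hB | hb
  · have hBmem : Fld.B ∈ D.labels (D.vtx (C.e (i + 1))) := hB ▸ lab_mem_labels hmuvtx
    have hv1 := d1 _ (inter C (i + 1)) hBmem
    refine ⟨hB, hv1, ?_⟩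
    have hne : D.mu (C.e ((i + 1) - 1)) ≠ C.e (i + 1) := incoming_ne C (i + 1)
    rw [add_sub_cancel_right] at hne
    have hle := pair_le_labels hne hmuvtx rfl
    rw [hB, hv1] at hle
    exact d4 _ hle
  · exact absurd (hb ▸ lab_mem_labels hmuvtx) (d2 _ (inter C (i + 1)))

lemma backward (C : D.Cycle) (i : ZMod C.n)
    (hv : D.labels (D.vtx (C.e i)) = {Fld.B, Fld.A, Fld.A}) (hl : D.lab (C.e i) = Fld.B) :
    D.labels (D.vtx (C.e (i - 1))) = {Fld.B, Fld.A, Fld.A} ∧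
    D.lab (C.e (i - 1)) = Fld.B := by
  have hle := pair_le_labels (incoming_ne C i).symm rfl (incoming_vtx C i)
  rw [hl, hv] at hle
  have hA : D.lab (D.mu (C.e (i - 1))) = Fld.A := d4 _ hle
  have hp := D.prop_ok (C.e (i - 1))
  rw [hA] at hp
  rcases d3' _ hp with hB | hb
  · have hBmem : Fld.B ∈ D.labels (D.vtx (C.e (i - 1))) := hB ▸ lab_mem_labels rfl
    exact ⟨d1 _ (inter C (i - 1)) hBmem, hB⟩
  · exact absurd (hb ▸ lab_mem_labels rfl) (d2 _ (inter C (i - 1)))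

end BAAProof

/-- In any diagram, every cycle of the multigraph that passes
through an interaction vertex of type `{B,A,A}` passes only through interaction
vertices of type `{B,A,A}`, and every edge of that cycle is a propagator of
type `{A,B}`. -/
theorem cycle_through_BAA_is_all_BAA (D : Diagram) (C : D.Cycle)
    (hBAA : ∃ i, D.labels (D.vtx (C.e i)) = {Fld.B, Fld.A, Fld.A}) :
    (∀ i, D.labels (D.vtx (C.e i)) = {Fld.B, Fld.A, Fld.A}) ∧
    (∀ i, ({D.lab (C.e i), D.lab (D.mu (C.e i))} : Multiset Fld)
        = {Fld.A, Fld.B}) := by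
  open BAAProof in
  haveI : NeZero C.n := ⟨C.npos.ne'⟩
  obtain ⟨i0, hi0⟩ := hBAA
  have hstart := BAAProof.d5 _ (hi0 ▸ BAAProof.lab_mem_labels rfl)
  rcases hstart with hA | hB
  · -- forward propagation
    have key : ∀ k : ℕ, D.labels (D.vtx (C.e (i0 + k))) = {Fld.B, Fld.A, Fld.A} ∧
        D.lab (C.e (i0 + k)) = Fld.A := by
      intro k
      induction k with
      | zero => simpa using ⟨hi0, hA⟩
      | succ k ih =>
        have h := BAAProof.forward C (i0 + k) ih.1 ih.2
        have : (i0 + (↑(k + 1) : ZMod C.n)) = (i0 + k) + 1 := by push_cast; ring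
        rw [this]
        exact ⟨h.2.1, h.2.2⟩
    have hall : ∀ j : ZMod C.n, D.labels (D.vtx (C.e j)) = {Fld.B, Fld.A, Fld.A} ∧
        D.lab (C.e j) = Fld.A := by
      intro j
      have : i0 + ((j - i0).val : ZMod C.n) = j := by
        rw [ZMod.natCast_rightInverse (j - i0)]; ring
      simpa [this] using key (j - i0).val
    refine ⟨fun i => (hall i).1, fun i => ?_⟩
    have h := BAAProof.forward C i (hall i).1 (hall i).2
    rw [(hall i).2, h.1]
  · -- backward propagation
    have key : ∀ k : ℕ, D.labels (D.vtx (C.e (i0 - k))) = {Fld.B, Fld.A, Fld.A} ∧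
        D.lab (C.e (i0 - k)) = Fld.B := by
      intro k
      induction k with
      | zero => simpa using ⟨hi0, hB⟩
      | succ k ih =>
        have h := BAAProof.backward C (i0 - k) ih.1 ih.2
        have : (i0 - (↑(k + 1) : ZMod C.n)) = (i0 - k) - 1 := by push_cast; ring
        rw [this]
        exact h
    have hall : ∀ j : ZMod C.n, D.labels (D.vtx (C.e j)) = {Fld.B, Fld.A, Fld.A} ∧
        D.lab (C.e j) = Fld.B := by
      intro j
      have : i0 - ((i0 - j).val : ZMod C.n) = j := by
        rw [ZMod.natCast_rightInverse (i0 - j)]; ring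
      simpa [this] using key (i0 - j).val
    refine ⟨fun i => (hall i).1, fun i => ?_⟩
    have hp := D.prop_ok (C.e i)
    rw [(hall i).2] at hp
    rw [(hall i).2, BAAProof.d6 _ hp]
    decide
end

section
/- In any diagram, every interaction vertex joined by an edge to an interaction vertex of type {φbar,c,ψ} contains at least one half-edge labeled A. (Combinatorial content of Corollary 1: every branch arising from the vertex φbar c ψ necessarily passes through vertices containing an A-leg.) -/
/-! The fields at the far end of a propagator leaving `φbar`, `c` or `ψ` are `φ`, `cbar`, `χbar`
and `ηbar`; each interaction vertex containing one of these also contains an `A` (no vertex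
contains `ηbar`). -/

instance : Fintype Fld :=
  Fintype.ofList [Fld.A, Fld.psi, Fld.chibar, Fld.c, Fld.cbar, Fld.phi, Fld.phibar, Fld.etabar,
    Fld.B, Fld.b] (by intro x; cases x <;> simp)

theorem mem_phi_cbar_chibar_etabar_of_mem_propTypes {x y : Fld}
    (hx : x ∈ ({Fld.phibar, Fld.c, Fld.psi} : Multiset Fld))
    (hxy : ({x, y} : Multiset Fld) ∈ propTypes) :
    y ∈ ({Fld.phi, Fld.cbar, Fld.chibar, Fld.etabar} : Multiset Fld) := by
  revert x y
  decide

theorem A_mem_of_mem_vertexTypes {s : Multiset Fld} (hs : s ∈ vertexTypes) {y : Fld}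
    (hy : y ∈ ({Fld.phi, Fld.cbar, Fld.chibar, Fld.etabar} : Multiset Fld)) (hys : y ∈ s) :
    Fld.A ∈ s := by
  revert s y
  decide

theorem Diagram.lab_mem_labels (D : Diagram) (g : D.H) : D.lab g ∈ D.labels (D.vtx g) :=
  Multiset.mem_map.2 ⟨g, by simp [Diagram.fiber], rfl⟩

/-- combinatorial content of Corollary 1. In any diagram,
every interaction vertex joined by an edge to an interaction vertex of type
`{φbar,c,ψ}` contains at least one half-edge labeled `A`. -/
theorem neighbours_of_phibar_c_psi_carry_A (D : Diagram) (h : D.H)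
    (h1 : D.labels (D.vtx h) = {Fld.phibar, Fld.c, Fld.psi})
    (h2 : D.IsInteraction (D.vtx (D.mu h))) :
    Fld.A ∈ D.labels (D.vtx (D.mu h)) := by
  have hx : D.lab h ∈ ({Fld.phibar, Fld.c, Fld.psi} : Multiset Fld) := h1 ▸ D.lab_mem_labels h
  exact A_mem_of_mem_vertexTypes h2 (mem_phi_cbar_chibar_etabar_of_mem_propTypes hx (D.prop_ok h))
    (D.lab_mem_labels (D.mu h))
end

section
/- In any diagram, every cycle of the multigraph passes only through interaction vertices of one single type T, where T is one of {B,A,A}, {A,cbar,c}, {A,ψ,χbar}, {A,φbar,φ}; correspondingly, all edges of the cycle are propagators of the single type {A,B}, {c,cbar}, {χbar,ψ}, or {φ,φbar}, respectively. In particular, no cycle passes through an interaction vertex of type {χbar,A,c}, {φbar,c,ψ}, or {χbar,c,A,A}. -/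
section Aux

instance inst_s6 : Fintype Fld :=
  ⟨{.A, .psi, .chibar, .c, .cbar, .phi, .phibar, .etabar, .B, .b}, fun x => by cases x <;> decide⟩

/-- Weight function: vanishes on each propagator pair, nonnegative on each
pair of labels within a vertex type, and zero only on the four "good" pairs. -/
def fw : Fld → ℤ
  | .A => 3 | .B => -3 | .b => -3 | .c => 1 | .cbar => -1
  | .psi => 0 | .chibar => 0 | .etabar => 0 | .phi => -1 | .phibar => 1

/-- The four allowed (vertex type, propagator type) combinations for cycles. -/
def goodList : List (Multiset Fld × Multiset Fld) :=
  [({Fld.B, Fld.A, Fld.A}, {Fld.A, Fld.B}),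
   ({Fld.A, Fld.cbar, Fld.c}, {Fld.c, Fld.cbar}),
   ({Fld.A, Fld.psi, Fld.chibar}, {Fld.chibar, Fld.psi}),
   ({Fld.A, Fld.phibar, Fld.phi}, {Fld.phi, Fld.phibar})]

lemma fw_prop : ∀ x y : Fld, ({x, y} : Multiset Fld) ∈ propTypes → fw x + fw y = 0 := by decide

lemma fw_vtx_nonneg : ∀ x y : Fld, ∀ L ∈ vertexTypes, ({x, y} : Multiset Fld) ≤ L →
    0 ≤ fw x + fw y := by decide

lemma fw_vtx_zero : ∀ x y : Fld, ∀ L ∈ vertexTypes, ({x, y} : Multiset Fld) ≤ L →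
    fw x + fw y = 0 → (L, ({x, y} : Multiset Fld)) ∈ goodList := by decide

lemma prop_step : ∀ u v : Fld, ({u, v} : Multiset Fld) ∈ propTypes →
    ∀ q ∈ goodList, ∀ q' ∈ goodList, u ∈ q.2 → v ∈ q'.2 → q = q' := by decide

lemma prop_pair : ∀ u v : Fld, ({u, v} : Multiset Fld) ∈ propTypes →
    ∀ q ∈ goodList, u ∈ q.2 → v ∈ q.2 → ({u, v} : Multiset Fld) = q.2 := by decide

lemma good_not_bad : ∀ q ∈ goodList,
    q.1 ≠ ({Fld.chibar, Fld.A, Fld.c} : Multiset Fld) ∧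
    q.1 ≠ ({Fld.phibar, Fld.c, Fld.psi} : Multiset Fld) ∧
    q.1 ≠ ({Fld.chibar, Fld.c, Fld.A, Fld.A} : Multiset Fld) := by decide

lemma pair_le_of_mem {α : Type*} [DecidableEq α] {x y : α} {s : Multiset α}
    (hx : x ∈ s) (hy : y ∈ s) (hxy : x ≠ y) : ({x, y} : Multiset α) ≤ s := by
  have hy' : y ∈ s.erase x := (Multiset.mem_erase_of_ne hxy.symm).mpr hy
  calc ({x, y} : Multiset α) = x ::ₘ {y} := rfl
    _ ≤ x ::ₘ s.erase x := Multiset.cons_le_cons x (Multiset.singleton_le.mpr hy')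
    _ = s := Multiset.cons_erase hx

end Aux

/-- In any diagram, every cycle of the multigraph passes only
through interaction vertices of one single type `T`, where `T` is one of
`{B,A,A}`, `{A,cbar,c}`, `{A,ψ,χbar}`, `{A,φbar,φ}`; correspondingly, all edges
of the cycle are propagators of the single type `{A,B}`, `{c,cbar}`, `{χbar,ψ}`
or `{φ,φbar}`, respectively.  In particular, no cycle passes through an
interaction vertex of type `{χbar,A,c}`, `{φbar,c,ψ}`, or `{χbar,c,A,A}`. -/
theorem cycle_single_type (D : Diagram) (C : D.Cycle) :
    (∃ T P : Multiset Fld,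
      ((T = {Fld.B, Fld.A, Fld.A} ∧ P = {Fld.A, Fld.B}) ∨
       (T = {Fld.A, Fld.cbar, Fld.c} ∧ P = {Fld.c, Fld.cbar}) ∨
       (T = {Fld.A, Fld.psi, Fld.chibar} ∧ P = {Fld.chibar, Fld.psi}) ∨
       (T = {Fld.A, Fld.phibar, Fld.phi} ∧ P = {Fld.phi, Fld.phibar})) ∧
      (∀ i, D.labels (D.vtx (C.e i)) = T) ∧
      (∀ i, ({D.lab (C.e i), D.lab (D.mu (C.e i))} : Multiset Fld) = P)) ∧
    (∀ i, D.labels (D.vtx (C.e i)) ≠ {Fld.chibar, Fld.A, Fld.c} ∧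
          D.labels (D.vtx (C.e i)) ≠ {Fld.phibar, Fld.c, Fld.psi} ∧
          D.labels (D.vtx (C.e i)) ≠ {Fld.chibar, Fld.c, Fld.A, Fld.A}) := by
  haveI : NeZero C.n := ⟨C.npos.ne'⟩
  set g : ZMod C.n → D.H := fun i => D.mu (C.e (i - 1)) with hg
  have hgv : ∀ i, D.vtx (g i) = D.vtx (C.e i) := by
    intro i
    have := C.step (i - 1)
    rwa [sub_add_cancel] at this
  have hgne : ∀ i, g i ≠ C.e i := by
    intro i hc
    by_cases h : i - 1 = i
    · rw [hg] at hc
      simp only [h] at hc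
      exact D.mu_ne (C.e i) hc
    · exact (C.edges_distinct i (i - 1) (fun hh => h hh.symm)).2 hc.symm
  have hpair : ∀ i, ({D.lab (g i), D.lab (C.e i)} : Multiset Fld) ≤ D.labels (D.vtx (C.e i)) := by
    intro i
    have h1 : g i ∈ (D.fiber (D.vtx (C.e i))).val := by
      simp [Diagram.fiber, hgv i]
    have h2 : C.e i ∈ (D.fiber (D.vtx (C.e i))).val := by
      simp [Diagram.fiber]
    have hle := Multiset.map_le_map (f := D.lab) (pair_le_of_mem h1 h2 (hgne i))
    simpa [Diagram.labels] using hle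
  have hvt : ∀ i, D.labels (D.vtx (C.e i)) ∈ vertexTypes := by
    intro i
    rcases D.vtx_ok (D.vtx (C.e i)) with h | ⟨h0, hh⟩
    · exact h
    · exfalso
      have h1 : g i ∈ D.fiber (D.vtx (C.e i)) := by simp [Diagram.fiber, hgv i]
      have h2 : C.e i ∈ D.fiber (D.vtx (C.e i)) := by simp [Diagram.fiber]
      rw [Diagram.fiber, hh, Finset.mem_singleton] at h1 h2
      exact hgne i (h1.trans h2.symm)
  have hsum0 : ∑ i : ZMod C.n, (fw (D.lab (C.e i)) + fw (D.lab (D.mu (C.e i)))) = 0 :=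
    Finset.sum_eq_zero (fun i _ => fw_prop _ _ (D.prop_ok (C.e i)))
  have hshift : ∑ i : ZMod C.n, fw (D.lab (g i)) = ∑ i : ZMod C.n, fw (D.lab (D.mu (C.e i))) :=
    Fintype.sum_equiv (Equiv.subRight (1 : ZMod C.n)) _ _ (fun i => rfl)
  have hsum : ∑ i : ZMod C.n, (fw (D.lab (g i)) + fw (D.lab (C.e i))) = 0 := by
    rw [Finset.sum_add_distrib, hshift, add_comm, ← Finset.sum_add_distrib, hsum0]
  have hzero : ∀ i, fw (D.lab (g i)) + fw (D.lab (C.e i)) = 0 := by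
    intro i
    exact (Finset.sum_eq_zero_iff_of_nonneg
      (fun j _ => fw_vtx_nonneg _ _ _ (hvt j) (hpair j))).mp hsum i (Finset.mem_univ i)
  set Q : ZMod C.n → Multiset Fld × Multiset Fld :=
    fun i => (D.labels (D.vtx (C.e i)), ({D.lab (g i), D.lab (C.e i)} : Multiset Fld)) with hQ
  have hQmem : ∀ i, Q i ∈ goodList := fun i => fw_vtx_zero _ _ _ (hvt i) (hpair i) (hzero i)
  have hgsucc : ∀ i, g (i + 1) = D.mu (C.e i) := by
    intro i; rw [hg]; simp
  have hQstep : ∀ i, Q (i + 1) = Q i := by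
    intro i
    refine (prop_step (D.lab (C.e i)) (D.lab (D.mu (C.e i))) (D.prop_ok (C.e i))
      (Q i) (hQmem i) (Q (i + 1)) (hQmem (i + 1)) ?_ ?_).symm
    · simp [hQ]
    · rw [hQ]
      simp [hgsucc i]
  have hQconst : ∀ i, Q i = Q 0 := by
    have key : ∀ k : ℕ, Q (k : ZMod C.n) = Q 0 := by
      intro k
      induction k with
      | zero => simp
      | succ m ih => rw [Nat.cast_succ, hQstep, ih]
    intro i
    have := key i.val
    rwa [ZMod.natCast_val, ZMod.cast_id] at this
  constructor
  · refine ⟨(Q 0).1, (Q 0).2, ?_, ?_, ?_⟩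
    · have h0 := hQmem 0
      simp only [goodList, List.mem_cons, List.not_mem_nil, or_false] at h0
      rcases h0 with h | h | h | h
      · exact Or.inl ⟨by rw [h], by rw [h]⟩
      · exact Or.inr (Or.inl ⟨by rw [h], by rw [h]⟩)
      · exact Or.inr (Or.inr (Or.inl ⟨by rw [h], by rw [h]⟩))
      · exact Or.inr (Or.inr (Or.inr ⟨by rw [h], by rw [h]⟩))
    · intro i
      exact congrArg Prod.fst (hQconst i)
    · intro i
      have h1 : D.lab (C.e i) ∈ (Q i).2 := by simp [hQ]
      have h2 : D.lab (D.mu (C.e i)) ∈ (Q i).2 := by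
        have : D.lab (D.mu (C.e i)) ∈ (Q (i + 1)).2 := by rw [hQ]; simp [hgsucc i]
        rwa [hQconst (i + 1), ← hQconst i] at this
      have := prop_pair _ _ (D.prop_ok (C.e i)) (Q i) (hQmem i) h1 h2
      rw [← hQconst i]
      exact this
  · intro i
    exact good_not_bad (Q i) (hQmem i)
end

section
/- Every connected diagram having at least one external vertex labeled by a field other than B and b is a tree, i.e. its multigraph contains no cycle. (Combinatorial content of Proposition 3: all connected n-point Green functions involving any field other than the Lautrup–Nakanishi fields B and b receive no loop contributions and are therefore tree-level exact.) -/
/-- Weight assignment: each propagator pair sums to `4`, each interaction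
vertex sums to `4`, and each field has weight `≤ 4`, with equality exactly
for `B` and `b`. -/
def wt : Fld → ℕ
  | Fld.A => 0 | Fld.psi => 1 | Fld.chibar => 3 | Fld.c => 1 | Fld.cbar => 3
  | Fld.phi => 2 | Fld.phibar => 2 | Fld.etabar => 3 | Fld.B => 4 | Fld.b => 4

lemma wt_prop : ∀ m ∈ propTypes, (m.map wt).sum = 4 := by
  intro m hm
  simp only [propTypes, List.mem_cons, List.mem_singleton, List.not_mem_nil, or_false] at hm
  rcases hm with rfl | rfl | rfl | rfl | rfl | rfl <;> rfl

lemma wt_vertex : ∀ m ∈ vertexTypes, (m.map wt).sum = 4 := by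
  intro m hm
  simp only [vertexTypes, List.mem_cons, List.mem_singleton, List.not_mem_nil, or_false] at hm
  rcases hm with rfl | rfl | rfl | rfl | rfl | rfl | rfl <;> rfl

lemma wt_le : ∀ f : Fld, wt f ≤ 4 := by intro f; cases f <;> simp [wt]

lemma wt_lt : ∀ f : Fld, f ≠ Fld.B → f ≠ Fld.b → wt f < 4 := by
  intro f hB hb; cases f <;> simp_all [wt]

/-- `diagReach D c n v` : there is a walk of length `n` from `v` to a
vertex of the cycle `c`. -/
def diagReach (D : Diagram) (c : D.Cycle) : ℕ → D.V → Prop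
  | 0, v => ∃ i, D.vtx (c.e i) = v
  | n+1, v => ∃ h, D.vtx h = v ∧ diagReach D c n (D.vtx (D.mu h))

/-- combinatorial content of Proposition 3. Every connected
diagram having at least one external vertex labeled by a field other than `B`
and `b` is a tree, i.e. its multigraph contains no cycle. -/
theorem connected_diagram_with_other_external_leg_is_tree (D : Diagram)
    (hconn : D.Connected)
    (hext : ∃ (v : D.V) (h₀ : D.H), D.fiber v = {h₀} ∧
      D.lab h₀ ≠ Fld.B ∧ D.lab h₀ ≠ Fld.b) :
    IsEmpty D.Cycle := by
  classical
  refine ⟨fun cyc => ?_⟩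
  obtain ⟨v₀, h₀, hfib, hB0, hb0⟩ := hext
  haveI : NeZero cyc.n := ⟨cyc.npos.ne'⟩
  -- every vertex can reach the cycle
  have hex : ∀ v, ∃ n, diagReach D cyc n v := by
    intro v
    have hrt := hconn v (D.vtx (cyc.e 0))
    induction hrt using Relation.ReflTransGen.head_induction_on with
    | refl => exact ⟨0, ⟨0, rfl⟩⟩
    | head hadj _ ih =>
      obtain ⟨n, hn⟩ := ih
      obtain ⟨h, hv, hu⟩ := hadj
      exact ⟨n + 1, h, hv, by rw [hu]; exact hn⟩
  set d : D.V → ℕ := fun v => Nat.find (hex v) with hd_def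
  have hreach : ∀ v, diagReach D cyc (d v) v := fun v => Nat.find_spec (hex v)
  have hOnCyc : ∀ i, d (D.vtx (cyc.e i)) = 0 :=
    fun i => Nat.le_zero.mp (Nat.find_min' _ ⟨i, rfl⟩)
  have hOnCyc' : ∀ i, d (D.vtx (D.mu (cyc.e i))) = 0 := by
    intro i; rw [cyc.step i]; exact hOnCyc _
  have hidx : ∀ v, d v = 0 → ∃ i, D.vtx (cyc.e i) = v := by
    intro v h0
    have hr := hreach v
    rw [h0] at hr
    exact hr
  choose idx hidxspec using hidx
  have hstep : ∀ v, ¬ d v = 0 → ∃ h, D.vtx h = v ∧ d (D.vtx (D.mu h)) < d v := by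
    intro v h0
    obtain ⟨m, hm⟩ := Nat.exists_eq_succ_of_ne_zero h0
    have hr := hreach v
    rw [hm] at hr
    obtain ⟨h, hv, hrm⟩ := hr
    refine ⟨h, hv, ?_⟩
    calc d (D.vtx (D.mu h)) ≤ m := Nat.find_min' _ hrm
      _ < d v := hm ▸ m.lt_succ_self
  choose gT hgT1 hgT2 using hstep
  set g : D.V → D.H := fun v => if hv : d v = 0 then cyc.e (idx v hv) else gT v hv
    with hg_def
  have hg0 : ∀ v (hv : d v = 0), g v = cyc.e (idx v hv) := by
    intro v hv; rw [hg_def]; exact dif_pos hv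
  have hgn : ∀ v (hv : ¬ d v = 0), g v = gT v hv := by
    intro v hv; rw [hg_def]; exact dif_neg hv
  have hg1 : ∀ v, D.vtx (g v) = v := by
    intro v
    by_cases hv : d v = 0
    · rw [hg0 v hv]; exact hidxspec v hv
    · rw [hgn v hv]; exact hgT1 v hv
  have hg2 : ∀ v (hv : ¬ d v = 0), d (D.vtx (D.mu (g v))) < d v := by
    intro v hv; rw [hgn v hv]; exact hgT2 v hv
  -- g v is never the partner of g w
  have gnmu : ∀ v w, g v ≠ D.mu (g w) := by
    intro v w heq
    by_cases hv : d v = 0 <;> by_cases hw : d w = 0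
    · have h1 : cyc.e (idx v hv) = D.mu (cyc.e (idx w hw)) := by
        rw [← hg0 v hv, ← hg0 w hw]; exact heq
      by_cases hij : idx v hv = idx w hw
      · rw [hij] at h1
        exact D.mu_ne (cyc.e (idx w hw)) h1.symm
      · exact (cyc.edges_distinct _ _ hij).2 h1
    · have h1 : g w = D.mu (cyc.e (idx v hv)) := by
        rw [← hg0 v hv, heq, D.mu_invol]
      have h2 : d w = 0 := by rw [← hg1 w, h1]; exact hOnCyc' _
      exact hw h2
    · have h2 : d v = 0 := by rw [← hg1 v, heq, hg0 w hw]; exact hOnCyc' _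
      exact hv h2
    · have h1 := hg2 w hw
      have h2 := hg2 v hv
      rw [← heq, hg1] at h1
      have h3 : D.mu (g v) = g w := by rw [heq, D.mu_invol]
      rw [h3, hg1] at h2
      omega
  -- the injection V ⊕ V → H
  have hFinj : Function.Injective (Sum.elim g (fun v => D.mu (g v))) := by
    intro x y hxy
    match x, y with
    | Sum.inl v, Sum.inl w =>
      have : v = w := by rw [← hg1 v, ← hg1 w]; exact congrArg D.vtx hxy
      rw [this]
    | Sum.inl v, Sum.inr w => exact absurd hxy (gnmu v w)
    | Sum.inr v, Sum.inl w => exact absurd hxy.symm (gnmu w v)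
    | Sum.inr v, Sum.inr w =>
      have h1 : g v = g w := D.mu_invol.injective hxy
      have : v = w := by rw [← hg1 v, ← hg1 w, h1]
      rw [this]
  have hcard : 2 * Fintype.card D.V ≤ Fintype.card D.H := by
    have := Fintype.card_le_of_injective _ hFinj
    rw [Fintype.card_sum] at this
    omega
  -- counting with weights
  have pair4 : ∀ h : D.H, wt (D.lab h) + wt (D.lab (D.mu h)) = 4 := by
    intro h
    have := wt_prop _ (D.prop_ok h)
    simpa using this
  have sumH : ∑ h : D.H, wt (D.lab h) = 2 * Fintype.card D.H := by
    have e1 : ∑ h : D.H, wt (D.lab (D.mu h)) = ∑ h : D.H, wt (D.lab h) :=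
      Function.Bijective.sum_comp D.mu_invol.bijective (fun h => wt (D.lab h))
    have e2 : ∑ h : D.H, (wt (D.lab h) + wt (D.lab (D.mu h)))
        = 4 * Fintype.card D.H := by
      rw [Finset.sum_congr rfl (fun h _ => pair4 h)]
      simp [Finset.card_univ, Nat.mul_comm]
    rw [Finset.sum_add_distrib, e1] at e2
    omega
  have fibersum : ∑ v : D.V, ∑ h ∈ D.fiber v, wt (D.lab h)
      = ∑ h : D.H, wt (D.lab h) :=
    Finset.sum_fiberwise_of_maps_to (fun h _ => Finset.mem_univ (D.vtx h)) _
  have fiber_lab : ∀ v : D.V, ∑ h ∈ D.fiber v, wt (D.lab h)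
      = ((D.labels v).map wt).sum := by
    intro v
    rw [Diagram.labels, Multiset.map_map]
    rfl
  have per_vertex : ∀ v : D.V, ∑ h ∈ D.fiber v, wt (D.lab h) ≤ 4 := by
    intro v
    rcases D.vtx_ok v with hint | ⟨h, hh⟩
    · have hint' : D.labels v ∈ vertexTypes := hint
      rw [fiber_lab v, wt_vertex _ hint']
    · have hfv : D.fiber v = {h} := hh
      rw [hfv, Finset.sum_singleton]
      exact wt_le _
  have special : ∑ h ∈ D.fiber v₀, wt (D.lab h) < 4 := by
    rw [hfib, Finset.sum_singleton]
    exact wt_lt _ hB0 hb0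
  have strict : ∑ v : D.V, ∑ h ∈ D.fiber v, wt (D.lab h)
      < ∑ _v : D.V, 4 :=
    Finset.sum_lt_sum (fun v _ => per_vertex v) ⟨v₀, Finset.mem_univ _, special⟩
  have hV4 : ∑ _v : D.V, 4 = 4 * Fintype.card D.V := by
    simp [Finset.card_univ, Nat.mul_comm]
  rw [fibersum, sumH, hV4] at strict
  omega
end

section
/- No connected loop diagram contains an interaction vertex of type {χbar,A,c}, {φbar,c,ψ}, or {χbar,c,A,A}: every interaction vertex of a connected loop diagram has type {B,A,A}, {A,cbar,c}, {A,ψ,χbar}, or {A,φbar,φ}. -/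
/-! ### Auxiliary material for the proof -/

instance Fld.instFintype : Fintype Fld :=
  ⟨⟨[Fld.A, Fld.psi, Fld.chibar, Fld.c, Fld.cbar, Fld.phi, Fld.phibar, Fld.etabar,
      Fld.B, Fld.b], by decide⟩, fun x => by cases x <;> decide⟩

namespace TYMAux

/-- ghost-number-like weight: `c` minus `cbar`. -/
def w1 : Fld → ℤ | .c => 1 | .cbar => -1 | _ => 0
/-- `φ` minus `φbar`. -/
def w2 : Fld → ℤ | .phi => 1 | .phibar => -1 | _ => 0
/-- `ψ` minus `χbar` minus `ηbar`. -/
def w3 : Fld → ℤ | .psi => 1 | .chibar => -1 | .etabar => -1 | _ => 0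
/-- `A` minus `B` minus `b`. -/
def w4 : Fld → ℤ | .A => 1 | .B => -1 | .b => -1 | _ => 0

/-- Sum of a weight over a multiset of labels. -/
def q (w : Fld → ℤ) (t : Multiset Fld) : ℤ := (t.map w).sum

/-- First test functional. -/
def G1 (t : Multiset Fld) : ℤ := q w1 t + q w4 t + (2 - (Multiset.card t : ℤ))

/-- Second test functional. -/
def G2 (t : Multiset Fld) : ℤ :=
  q w1 t - q w2 t + q w3 t + q w4 t + (2 - (Multiset.card t : ℤ))

set_option linter.constructorNameAsVariable false in
lemma pair_sum : ∀ a b : Fld, ({a, b} : Multiset Fld) ∈ propTypes →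
    w1 a + w1 b = 0 ∧ w2 a + w2 b = 0 ∧ w3 a + w3 b = 0 ∧ w4 a + w4 b = 0 := by
  decide

lemma G1_nonneg_vertex : ∀ t ∈ vertexTypes, 0 ≤ G1 t := by decide
lemma G1_nonneg_ext : ∀ x : Fld, 0 ≤ G1 {x} := by decide
lemma G2_nonneg_vertex : ∀ t ∈ vertexTypes, 0 ≤ G2 t := by decide
lemma G2_nonneg_ext : ∀ x : Fld, 0 ≤ G2 {x} := by decide

variable (D : Diagram)

lemma labels_eq_sum (v : D.V) (w : Fld → ℤ) :
    q w (D.labels v) = ∑ h ∈ D.fiber v, w (D.lab h) := by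
  simp only [q, Diagram.labels, Multiset.map_map]
  rfl

lemma q_nonneg (v : D.V) : 0 ≤ G1 (D.labels v) ∧ 0 ≤ G2 (D.labels v) := by
  rcases D.vtx_ok v with h | ⟨h, hh⟩
  · exact ⟨G1_nonneg_vertex _ h, G2_nonneg_vertex _ h⟩
  · have : D.labels v = {D.lab h} := by
      simp only [Diagram.labels, Diagram.fiber, hh]
      rfl
    rw [this]
    exact ⟨G1_nonneg_ext _, G2_nonneg_ext _⟩

lemma sum_w_zero (w : Fld → ℤ) (hw : ∀ h, w (D.lab h) + w (D.lab (D.mu h)) = 0) :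
    ∑ v : D.V, q w (D.labels v) = 0 := by
  have h1 : ∑ v : D.V, q w (D.labels v) = ∑ h : D.H, w (D.lab h) := by
    rw [Finset.sum_congr rfl (fun v _ => labels_eq_sum D v w)]
    exact Finset.sum_fiberwise _ _ _
  rw [h1]
  have h2 : ∑ h : D.H, w (D.lab (D.mu h)) = ∑ h : D.H, w (D.lab h) :=
    Equiv.sum_comp (Function.Involutive.toPerm _ D.mu_invol) (fun h => w (D.lab h))
  have h3 : ∑ h : D.H, (w (D.lab h) + w (D.lab (D.mu h))) = 0 := by
    rw [Finset.sum_congr rfl (fun h _ => hw h)]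
    simp
  rw [Finset.sum_add_distrib, h2] at h3
  linarith

lemma sum_card_eq : ∑ v : D.V, (Multiset.card (D.labels v) : ℤ) = (Fintype.card D.H : ℤ) := by
  have h1 : ∀ v : D.V, (Multiset.card (D.labels v) : ℤ) = ((D.fiber v).card : ℤ) := by
    intro v; simp [Diagram.labels]
  rw [Finset.sum_congr rfl (fun v _ => h1 v), ← Nat.cast_sum]
  congr 1
  exact (Finset.card_eq_sum_card_fiberwise (fun h _ => Finset.mem_univ (D.vtx h))).symm

/-! ### The graph-theoretic inequality: `2 |V| ≤ |H|` for a connected loop diagram. -/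

/-- Vertices at "generation at most n" from the cycle vertex set. -/
def reachN (Cv : D.V → Prop) : ℕ → D.V → Prop
  | 0, v => Cv v
  | (n+1), v => reachN Cv n v ∨ ∃ h, D.vtx h = v ∧ reachN Cv n (D.vtx (D.mu h))

lemma two_card_le (hconn : D.Connected) (C : D.Cycle) :
    2 * Fintype.card D.V ≤ Fintype.card D.H := by
  classical
  set Cv : D.V → Prop := fun v => ∃ i, D.vtx (C.e i) = v with hCv
  -- every vertex is reachable from the cycle
  have hmono : ∀ n (v : D.V), reachN D Cv n v → reachN D Cv (n+1) v := fun n v hv => Or.inl hv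
  have hreach : ∀ v : D.V, ∃ n, reachN D Cv n v := by
    intro v
    have hrt : Relation.ReflTransGen D.Adj (D.vtx (C.e 0)) v := hconn _ v
    induction hrt with
    | refl => exact ⟨0, ⟨0, rfl⟩⟩
    | tail hab hbc ih =>
        obtain ⟨n, hn⟩ := ih
        obtain ⟨h, hh1, hh2⟩ := hbc
        refine ⟨n + 1, Or.inr ⟨D.mu h, hh2, ?_⟩⟩
        rw [D.mu_invol h, hh1]
        exact hn
  set d : D.V → ℕ := fun v => Nat.find (hreach v) with hd
  have hd_spec : ∀ v, reachN D Cv (d v) v := fun v => Nat.find_spec (hreach v)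
  have hd_min : ∀ v n, reachN D Cv n v → d v ≤ n := fun v n h => Nat.find_min' (hreach v) h
  have hparent : ∀ v, ¬ Cv v → ∃ h, D.vtx h = v ∧ d (D.vtx (D.mu h)) < d v := by
    intro v hv
    have h0 : d v ≠ 0 := by
      intro h0
      exact hv (by have := hd_spec v; rwa [h0] at this)
    obtain ⟨m, hm⟩ := Nat.exists_eq_succ_of_ne_zero h0
    have hs := hd_spec v
    rw [hm] at hs
    rcases hs with hs | ⟨h, hh1, hh2⟩
    · exact absurd (hd_min v m hs) (by omega)
    · exact ⟨h, hh1, lt_of_le_of_lt (hd_min _ m hh2) (by omega)⟩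
  -- the edge-selecting map
  set f : D.V → D.H := fun v =>
    if hv : Cv v then C.e hv.choose else (hparent v hv).choose with hf
  have hf_pos : ∀ v (hv : Cv v), f v = C.e hv.choose := fun v hv => dif_pos hv
  have hf_neg : ∀ v (hv : ¬ Cv v), f v = (hparent v hv).choose := fun v hv => dif_neg hv
  have hf_vtx : ∀ v, D.vtx (f v) = v := by
    intro v
    by_cases hv : Cv v
    · rw [hf_pos v hv]; exact hv.choose_spec
    · rw [hf_neg v hv]; exact (hparent v hv).choose_spec.1
  have hf_cyc : ∀ v, Cv v → (∃ i, f v = C.e i) ∧ Cv (D.vtx (D.mu (f v))) := by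
    intro v hv
    have h1 : f v = C.e hv.choose := hf_pos v hv
    exact ⟨⟨hv.choose, h1⟩, by rw [h1, C.step]; exact ⟨_, rfl⟩⟩
  have hf_par : ∀ v, ¬ Cv v → d (D.vtx (D.mu (f v))) < d v := by
    intro v hv
    rw [hf_neg v hv]
    exact (hparent v hv).choose_spec.2
  -- the key disjointness property
  have hkey : ∀ v w : D.V, f v ≠ D.mu (f w) := by
    intro v w heq
    by_cases hv : Cv v <;> by_cases hw : Cv w
    · obtain ⟨⟨i, hi⟩, -⟩ := hf_cyc v hv
      obtain ⟨⟨j, hj⟩, -⟩ := hf_cyc w hw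
      rw [hi, hj] at heq
      by_cases hij : i = j
      · rw [hij] at heq
        exact D.mu_ne (C.e j) heq.symm
      · exact (C.edges_distinct i j hij).2 heq
    · -- v on cycle, w not: mu (f v) = f w, so w = vtx (f w) ∈ Cv, contradiction
      apply hw
      have : D.mu (f v) = f w := by rw [heq, D.mu_invol]
      have h2 := (hf_cyc v hv).2
      rw [this, hf_vtx w] at h2
      exact h2
    · -- w on cycle, v not: v = vtx (f v) = vtx (mu (f w)) ∈ Cv
      apply hv
      have h2 := (hf_cyc w hw).2
      rw [← heq, hf_vtx v] at h2
      exact h2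
    · -- neither: distances decrease both ways
      have h1 : d v < d w := by
        have := hf_par w hw
        rwa [← heq, hf_vtx v] at this
      have h2 : d w < d v := by
        have := hf_par v hv
        have hmu : D.mu (f v) = f w := by rw [heq, D.mu_invol]
        rwa [hmu, hf_vtx w] at this
      omega
  -- assemble the injection
  have hinj : Function.Injective (fun p : D.V × Bool => if p.2 then D.mu (f p.1) else f p.1) := by
    rintro ⟨v, a⟩ ⟨w, b⟩ heq
    simp only at heq
    cases a <;> cases b <;> simp only [if_true, if_false, Bool.false_eq_true] at heq
    · have : v = w := by rw [← hf_vtx v, ← hf_vtx w, heq]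
      rw [this]
    · exact absurd heq (hkey v w)
    · exact absurd heq.symm (hkey w v)
    · have h2 : f v = f w := D.mu_invol.injective heq
      have : v = w := by rw [← hf_vtx v, ← hf_vtx w, h2]
      rw [this]
  have := Fintype.card_le_of_injective _ hinj
  simpa [Fintype.card_prod, mul_comm] using this

end TYMAux

/-- No connected loop diagram contains an interaction vertex
of type `{χbar,A,c}`, `{φbar,c,ψ}`, or `{χbar,c,A,A}`: every interaction vertex
of a connected loop diagram has type `{B,A,A}`, `{A,cbar,c}`, `{A,ψ,χbar}` or
`{A,φbar,φ}`. -/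
theorem interaction_vertices_of_loop_diagram (D : Diagram)
    (hconn : D.Connected) (hloop : D.IsLoopDiagram) :
    ∀ v : D.V, D.IsInteraction v →
      D.labels v = {Fld.B, Fld.A, Fld.A} ∨
      D.labels v = {Fld.A, Fld.cbar, Fld.c} ∨
      D.labels v = {Fld.A, Fld.psi, Fld.chibar} ∨
      D.labels v = {Fld.A, Fld.phibar, Fld.phi} := by
  classical
  obtain ⟨C⟩ := hloop
  open TYMAux in
  have hcard := TYMAux.two_card_le D hconn C
  -- the four conservation laws
  have hw : ∀ h : D.H, (w1 (D.lab h) + w1 (D.lab (D.mu h)) = 0) ∧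
      (w2 (D.lab h) + w2 (D.lab (D.mu h)) = 0) ∧
      (w3 (D.lab h) + w3 (D.lab (D.mu h)) = 0) ∧
      (w4 (D.lab h) + w4 (D.lab (D.mu h)) = 0) :=
    fun h => TYMAux.pair_sum _ _ (D.prop_ok h)
  have hq1 : ∑ v : D.V, TYMAux.q TYMAux.w1 (D.labels v) = 0 :=
    TYMAux.sum_w_zero D _ (fun h => (hw h).1)
  have hq2 : ∑ v : D.V, TYMAux.q TYMAux.w2 (D.labels v) = 0 :=
    TYMAux.sum_w_zero D _ (fun h => (hw h).2.1)
  have hq3 : ∑ v : D.V, TYMAux.q TYMAux.w3 (D.labels v) = 0 :=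
    TYMAux.sum_w_zero D _ (fun h => (hw h).2.2.1)
  have hq4 : ∑ v : D.V, TYMAux.q TYMAux.w4 (D.labels v) = 0 :=
    TYMAux.sum_w_zero D _ (fun h => (hw h).2.2.2)
  have hr : ∑ v : D.V, (2 - (Multiset.card (D.labels v) : ℤ)) ≤ 0 := by
    have hce := TYMAux.sum_card_eq D
    have hcv : ∑ v : D.V, (2 : ℤ) = 2 * (Fintype.card D.V : ℤ) := by
      simp [Finset.sum_const, Finset.card_univ, mul_comm]
    have : ∑ v : D.V, (2 - (Multiset.card (D.labels v) : ℤ)) =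
        2 * (Fintype.card D.V : ℤ) - (Fintype.card D.H : ℤ) := by
      rw [Finset.sum_sub_distrib, hce, hcv]
    rw [this]
    have : (2 * Fintype.card D.V : ℤ) ≤ (Fintype.card D.H : ℤ) := by exact_mod_cast hcard
    linarith
  have hr' : ∑ v : D.V, (2 : ℤ) - ∑ v : D.V, (Multiset.card (D.labels v) : ℤ) ≤ 0 := by
    rw [← Finset.sum_sub_distrib]; exact hr
  have hS1 : ∑ v : D.V, TYMAux.G1 (D.labels v) ≤ 0 := by
    simp only [TYMAux.G1, Finset.sum_add_distrib, Finset.sum_sub_distrib]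
    linarith [hq1, hq4, hr, hr']
  have hS2 : ∑ v : D.V, TYMAux.G2 (D.labels v) ≤ 0 := by
    simp only [TYMAux.G2, Finset.sum_add_distrib, Finset.sum_sub_distrib]
    linarith [hq1, hq2, hq3, hq4, hr, hr']
  have hz1 : ∀ v : D.V, TYMAux.G1 (D.labels v) = 0 := by
    have hnn : ∀ v ∈ Finset.univ, (0 : ℤ) ≤ TYMAux.G1 (D.labels v) :=
      fun v _ => (TYMAux.q_nonneg D v).1
    have hsum : ∑ v : D.V, TYMAux.G1 (D.labels v) = 0 :=
      le_antisymm hS1 (Finset.sum_nonneg hnn)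
    intro v
    exact (Finset.sum_eq_zero_iff_of_nonneg hnn).mp hsum v (Finset.mem_univ v)
  have hz2 : ∀ v : D.V, TYMAux.G2 (D.labels v) = 0 := by
    have hnn : ∀ v ∈ Finset.univ, (0 : ℤ) ≤ TYMAux.G2 (D.labels v) :=
      fun v _ => (TYMAux.q_nonneg D v).2
    have hsum : ∑ v : D.V, TYMAux.G2 (D.labels v) = 0 :=
      le_antisymm hS2 (Finset.sum_nonneg hnn)
    intro v
    exact (Finset.sum_eq_zero_iff_of_nonneg hnn).mp hsum v (Finset.mem_univ v)
  intro v hv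
  have h1 := hz1 v
  have h2 := hz2 v
  simp only [Diagram.IsInteraction, vertexTypes, List.mem_cons, List.not_mem_nil, or_false] at hv
  rcases hv with ht | ht | ht | ht | ht | ht | ht
  · exact Or.inl ht
  · rw [ht] at h1; exact absurd h1 (by decide)
  · exact Or.inr (Or.inr (Or.inl ht))
  · exact Or.inr (Or.inl ht)
  · exact Or.inr (Or.inr (Or.inr ht))
  · rw [ht] at h2; exact absurd h2 (by decide)
  · rw [ht] at h1; exact absurd h1 (by decide)
end
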